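/- Let n, k, V be positive integers, let U^1, ..., U^V be real n×k matrices each with orthonormal columns, and let Ũ = [U^1 U^2 ⋯ U^V] ∈ ℝ^{n×(Vk)} be their horizontal concatenation. Then the minimum value of ∑_{v=1}^V ‖U Uᵀ − U^v (U^v)ᵀ‖_F² over all real n×k matrices U with Uᵀ U = I_k equals 2·V·k − 2·(sum of the k largest eigenvalues of Ũ Ũᵀ). -/

import Mathlib

/-!
With `P = U Uᵀ` and `P_v = U^v (U^v)ᵀ` orthogonal projections of trace `k`, each term is
`‖P - P_v‖_F² = 2k - 2 tr (P_v P)`, so the objective is `2Vk - 2 tr (A P)` with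
`A = Ũ Ũᵀ = ∑ v, P_v`. Maximising `tr (A P)` is Ky Fan's principle: in an orthonormal
eigenbasis `W` of `A`, `tr (A P) = ∑ i, λ_i d_i` where the diagonal entries `d_i` of `Wᵀ P W`
lie in `[0, 1]` and sum to `k`, and such a weighting of the `λ_i` is at most the sum of the
`k` largest of them, with equality when `P` projects onto the top `k` eigenvectors.
-/

open Matrix Finset

theorem sum_mul_le_sum_of_sum_eq_card {ι : Type*} [Fintype ι] (s : Finset ι) {μ c : ι → ℝ}
    (τ : ℝ) (hμs : ∀ i ∈ s, τ ≤ μ i) (hμsc : ∀ i ∉ s, μ i ≤ τ)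
    (hc0 : ∀ i, 0 ≤ c i) (hc1 : ∀ i, c i ≤ 1) (hc : ∑ i, c i = #s) :
    ∑ i, μ i * c i ≤ ∑ i ∈ s, μ i := by
  classical
  have hsign : ∑ i, (μ i - τ) * (c i - if i ∈ s then 1 else 0) ≤ 0 := by
    refine sum_nonpos fun i _ => ?_
    split_ifs with hi
    · exact mul_nonpos_of_nonneg_of_nonpos (sub_nonneg.2 (hμs i hi)) (by linarith [hc1 i])
    · exact mul_nonpos_of_nonpos_of_nonneg (sub_nonpos.2 (hμsc i hi)) (by linarith [hc0 i])
  have hexpand : ∑ i, (μ i - τ) * (c i - if i ∈ s then 1 else 0)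
      = ∑ i, μ i * c i - ∑ i ∈ s, μ i := by
    simp only [sub_mul, mul_sub, mul_ite, mul_one, mul_zero, sum_sub_distrib, sum_ite_mem,
      univ_inter, ← mul_sum, hc, sum_const, nsmul_eq_mul]
    ring
  linarith

theorem Fin.sum_mul_le_sum_filter_lt_of_antitone {n k : ℕ} (hk : 0 < k) (hkn : k ≤ n)
    {μ c : Fin n → ℝ} (hμ : Antitone μ) (hc0 : ∀ i, 0 ≤ c i) (hc1 : ∀ i, c i ≤ 1)
    (hc : ∑ i, c i = k) :
    ∑ i, μ i * c i ≤ ∑ i ∈ univ.filter (fun i : Fin n => (i : ℕ) < k), μ i := by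
  refine sum_mul_le_sum_of_sum_eq_card _ (μ ⟨k - 1, by omega⟩) (fun i hi => hμ ?_)
    (fun i hi => hμ ?_) hc0 hc1 ?_
  · simp only [mem_filter, mem_univ, true_and] at hi
    exact Fin.le_def.2 (by simp only; omega)
  · simp only [mem_filter, mem_univ, true_and, not_lt] at hi
    exact Fin.le_def.2 (by simp only; omega)
  · rw [hc, Fin.card_filter_val_lt, min_eq_right hkn]

theorem Fin.sum_filter_lt_eq_sum_castLE {M : Type*} [AddCommMonoid M] {n k : ℕ} (hkn : k ≤ n)
    (f : Fin n → M) :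
    ∑ i ∈ univ.filter (fun i : Fin n => (i : ℕ) < k), f i = ∑ j : Fin k, f (Fin.castLE hkn j) := by
  have hfilter : univ.filter (fun i : Fin n => (i : ℕ) < k) = univ.map (Fin.castLEEmb hkn) := by
    ext i
    simp only [mem_filter, mem_univ, true_and, mem_map, Fin.castLEEmb_apply]
    exact ⟨fun hi => ⟨⟨i, hi⟩, rfl⟩, by rintro ⟨j, rfl⟩; exact j.isLt⟩
  rw [hfilter, sum_map]
  rfl

namespace Matrix

variable {m n : Type*} [Fintype n]

theorem diag_mul_transpose_self_nonneg (U : Matrix m n ℝ) (i : m) : 0 ≤ (U * Uᵀ) i i :=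
  sum_nonneg fun j _ => mul_self_nonneg (U i j)

variable [Fintype m] [DecidableEq n]

theorem card_le_card_of_transpose_mul_self_eq_one {U : Matrix m n ℝ} (hU : Uᵀ * U = 1) :
    Fintype.card n ≤ Fintype.card m := by
  simpa [hU] using (rank_mul_le_right Uᵀ U).trans (rank_le_card_height U)

theorem trace_mul_transpose_of_transpose_mul_self_eq_one {U : Matrix m n ℝ} (hU : Uᵀ * U = 1) :
    trace (U * Uᵀ) = Fintype.card n := by
  rw [trace_mul_comm, hU, trace_one]

theorem mul_transpose_mul_self_of_transpose_mul_self_eq_one {U : Matrix m n ℝ}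
    (hU : Uᵀ * U = 1) : U * Uᵀ * (U * Uᵀ) = U * Uᵀ := by
  rw [Matrix.mul_assoc, ← Matrix.mul_assoc Uᵀ, hU, Matrix.one_mul]

theorem diag_mul_transpose_self_le_one [DecidableEq m] {U : Matrix m n ℝ} (hU : Uᵀ * U = 1)
    (i : m) : (U * Uᵀ) i i ≤ 1 := by
  have hproj : (1 - U * Uᵀ) * (1 - U * Uᵀ)ᵀ = 1 - U * Uᵀ := by
    rw [transpose_sub, transpose_one, transpose_mul, transpose_transpose, sub_mul, mul_sub,
      mul_sub, mul_transpose_mul_self_of_transpose_mul_self_eq_one hU]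
    simp
  have := diag_mul_transpose_self_nonneg (1 - U * Uᵀ) i
  rw [hproj, sub_apply, one_apply_eq] at this
  linarith

theorem trace_sub_mul_transpose_sub_of_transpose_mul_self_eq_one {U U' : Matrix m n ℝ}
    (hU : Uᵀ * U = 1) (hU' : U'ᵀ * U' = 1) :
    trace ((U * Uᵀ - U' * U'ᵀ) * (U * Uᵀ - U' * U'ᵀ)ᵀ)
      = 2 * Fintype.card n - 2 * trace (U' * U'ᵀ * (U * Uᵀ)) := by
  rw [transpose_sub, transpose_mul, transpose_mul, transpose_transpose, transpose_transpose,
    sub_mul, mul_sub, mul_sub, trace_sub, trace_sub, trace_sub,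
    mul_transpose_mul_self_of_transpose_mul_self_eq_one hU,
    mul_transpose_mul_self_of_transpose_mul_self_eq_one hU',
    trace_mul_transpose_of_transpose_mul_self_eq_one hU,
    trace_mul_transpose_of_transpose_mul_self_eq_one hU', trace_mul_comm (U * Uᵀ)]
  ring

theorem sum_trace_sub_mul_transpose_sub {ι : Type*} [Fintype ι] {U : Matrix m n ℝ}
    {Uv : ι → Matrix m n ℝ} (hU : Uᵀ * U = 1) (hUv : ∀ v, (Uv v)ᵀ * Uv v = 1) :
    ∑ v, trace ((U * Uᵀ - Uv v * (Uv v)ᵀ) * (U * Uᵀ - Uv v * (Uv v)ᵀ)ᵀ)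
      = 2 * Fintype.card ι * Fintype.card n - 2 * trace ((∑ v, Uv v * (Uv v)ᵀ) * (U * Uᵀ)) := by
  simp only [trace_sub_mul_transpose_sub_of_transpose_mul_self_eq_one hU (hUv _), sum_sub_distrib,
    sum_const, card_univ, nsmul_eq_mul, sum_mul, trace_sum, ← mul_sum]
  ring

end Matrix

theorem Matrix.of_finProdFinEquiv_mul_transpose {R : Type*} [NonUnitalNonAssocSemiring R]
    {m V k : ℕ} (Uv : Fin V → Matrix (Fin m) (Fin k) R) :
    (of fun i c => Uv (finProdFinEquiv.symm c).1 i (finProdFinEquiv.symm c).2) *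
        (of fun i c => Uv (finProdFinEquiv.symm c).1 i (finProdFinEquiv.symm c).2)ᵀ
      = ∑ v, Uv v * (Uv v)ᵀ := by
  ext i j
  simp only [mul_apply, transpose_apply, of_apply, sum_apply]
  rw [← finProdFinEquiv.sum_comp, Fintype.sum_prod_type]
  simp

namespace Matrix.IsHermitian

section

variable {n : Type*} [Fintype n] [DecidableEq n] {A : Matrix n n ℝ} (hA : A.IsHermitian)

theorem star_eigenvectorUnitary_eq_transpose :
    star (hA.eigenvectorUnitary : Matrix n n ℝ) = (hA.eigenvectorUnitary : Matrix n n ℝ)ᵀ := by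
  rw [star_eq_conjTranspose, conjTranspose_eq_transpose_of_trivial]

theorem transpose_eigenvectorUnitary_mul_self :
    (hA.eigenvectorUnitary : Matrix n n ℝ)ᵀ * hA.eigenvectorUnitary = 1 := by
  rw [← star_eigenvectorUnitary_eq_transpose, Unitary.star_mul_self_of_mem hA.eigenvectorUnitary.2]

theorem eigenvectorUnitary_mul_transpose_self :
    (hA.eigenvectorUnitary : Matrix n n ℝ) * (hA.eigenvectorUnitary : Matrix n n ℝ)ᵀ = 1 := by
  rw [← star_eigenvectorUnitary_eq_transpose, Unitary.mul_star_self_of_mem hA.eigenvectorUnitary.2]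

theorem transpose_eigenvectorUnitary_mul_mul_self :
    (hA.eigenvectorUnitary : Matrix n n ℝ)ᵀ * A * hA.eigenvectorUnitary
      = diagonal hA.eigenvalues := by
  have h := hA.conjStarAlgAut_star_eigenvectorUnitary
  rw [Unitary.conjStarAlgAut_star_apply, star_eigenvectorUnitary_eq_transpose] at h
  simpa using h

theorem trace_mul_eq_sum_eigenvalues_mul_diag (M : Matrix n n ℝ) :
    trace (A * M) = ∑ i, hA.eigenvalues i *
      ((hA.eigenvectorUnitary : Matrix n n ℝ)ᵀ * M * hA.eigenvectorUnitary) i i := by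
  have hW := hA.eigenvectorUnitary_mul_transpose_self
  have hD := hA.transpose_eigenvectorUnitary_mul_mul_self
  set W := (hA.eigenvectorUnitary : Matrix n n ℝ)
  have hconj : Wᵀ * A * W * (Wᵀ * M * W) = Wᵀ * (A * M) * W := by
    simp only [Matrix.mul_assoc, ← Matrix.mul_assoc W Wᵀ, hW, Matrix.one_mul]
  calc trace (A * M) = trace (Wᵀ * A * W * (Wᵀ * M * W)) := by
        rw [hconj, trace_mul_cycle, hW, Matrix.one_mul]
    _ = _ := by
        simp only [hD, trace, diag_apply, diagonal_mul]

end

variable {n k : ℕ} {A : Matrix (Fin n) (Fin n) ℝ} (hA : A.IsHermitian)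

theorem trace_mul_mul_transpose_le (hk : 0 < k) {e : Equiv.Perm (Fin n)}
    (he : Antitone fun i => hA.eigenvalues (e i)) {U : Matrix (Fin n) (Fin k) ℝ}
    (hU : Uᵀ * U = 1) :
    trace (A * (U * Uᵀ)) ≤
      ∑ i ∈ univ.filter (fun i : Fin n => (i : ℕ) < k), hA.eigenvalues (e i) := by
  have hkn : k ≤ n := by simpa using card_le_card_of_transpose_mul_self_eq_one hU
  have hW := hA.eigenvectorUnitary_mul_transpose_self
  set W := (hA.eigenvectorUnitary : Matrix (Fin n) (Fin n) ℝ)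
  have hB : (Wᵀ * U)ᵀ * (Wᵀ * U) = 1 := by
    rw [transpose_mul, transpose_transpose, Matrix.mul_assoc, ← Matrix.mul_assoc W, hW,
      Matrix.one_mul, hU]
  have hconj : Wᵀ * (U * Uᵀ) * W = Wᵀ * U * (Wᵀ * U)ᵀ := by
    rw [transpose_mul, transpose_transpose, Matrix.mul_assoc, Matrix.mul_assoc,
      Matrix.mul_assoc]
  have hsum : ∑ i, (Wᵀ * U * (Wᵀ * U)ᵀ) (e i) (e i) = k := by
    rw [Equiv.sum_comp e (fun i => (Wᵀ * U * (Wᵀ * U)ᵀ) i i)]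
    exact (trace_mul_transpose_of_transpose_mul_self_eq_one hB).trans (by rw [Fintype.card_fin])
  rw [hA.trace_mul_eq_sum_eigenvalues_mul_diag, hconj,
    ← Equiv.sum_comp e (fun i => hA.eigenvalues i * (Wᵀ * U * (Wᵀ * U)ᵀ) i i)]
  exact Fin.sum_mul_le_sum_filter_lt_of_antitone hk hkn he
    (fun i => diag_mul_transpose_self_nonneg _ _)
    (fun i => diag_mul_transpose_self_le_one hB _) hsum

theorem exists_trace_mul_mul_transpose_eq (hkn : k ≤ n) (e : Equiv.Perm (Fin n)) :
    ∃ U : Matrix (Fin n) (Fin k) ℝ, Uᵀ * U = 1 ∧ trace (A * (U * Uᵀ)) =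
      ∑ i ∈ univ.filter (fun i : Fin n => (i : ℕ) < k), hA.eigenvalues (e i) := by
  let f : Fin k ↪ Fin n := (Fin.castLEEmb hkn).trans e.toEmbedding
  let W := (hA.eigenvectorUnitary : Matrix (Fin n) (Fin n) ℝ)
  have hconj : (W.submatrix id f)ᵀ * A * W.submatrix id f = (Wᵀ * A * W).submatrix f f := by
    rw [submatrix_mul _ _ f id f Function.bijective_id,
      submatrix_mul _ _ f id id Function.bijective_id, submatrix_id_id, transpose_submatrix]
  refine ⟨W.submatrix id f, ?_, ?_⟩
  · rw [transpose_submatrix, ← submatrix_mul _ _ _ _ _ Function.bijective_id,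
      hA.transpose_eigenvectorUnitary_mul_self, submatrix_one_embedding]
  · rw [← Matrix.mul_assoc, trace_mul_cycle, hconj, hA.transpose_eigenvectorUnitary_mul_mul_self,
      submatrix_diagonal_embedding, trace_diagonal, Fin.sum_filter_lt_eq_sum_castLE hkn]
    rfl

end Matrix.IsHermitian

theorem min_disagreement_eq_two_Vk_sub_two_sum_k_largest_general
    (n k V : ℕ) (hk : 0 < k) (hV : 0 < V)
    (Uv : Fin V → Matrix (Fin n) (Fin k) ℝ)
    (hUv : ∀ v, (Uv v)ᵀ * Uv v = 1)
    (tildeU : Matrix (Fin n) (Fin (V * k)) ℝ)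
    (htildeU : tildeU = Matrix.of fun i c =>
      Uv (finProdFinEquiv.symm c).1 i (finProdFinEquiv.symm c).2)
    (hH : (tildeU * tildeUᵀ).IsHermitian)
    (e : Equiv.Perm (Fin n)) (he : Antitone (fun i => hH.eigenvalues (e i))) :
    IsLeast
      {t : ℝ | ∃ U : Matrix (Fin n) (Fin k) ℝ, Uᵀ * U = 1 ∧
        t = ∑ v, trace ((U * Uᵀ - Uv v * (Uv v)ᵀ) * (U * Uᵀ - Uv v * (Uv v)ᵀ)ᵀ)}
      (2 * (V : ℝ) * (k : ℝ)
        - 2 * ∑ i ∈ Finset.univ.filter (fun i : Fin n => (i : ℕ) < k), hH.eigenvalues (e i)) := by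
  have hkn : k ≤ n := by simpa using card_le_card_of_transpose_mul_self_eq_one (hUv ⟨0, hV⟩)
  have hobjective : ∀ U : Matrix (Fin n) (Fin k) ℝ, Uᵀ * U = 1 →
      ∑ v, trace ((U * Uᵀ - Uv v * (Uv v)ᵀ) * (U * Uᵀ - Uv v * (Uv v)ᵀ)ᵀ)
        = 2 * V * k - 2 * trace (tildeU * tildeUᵀ * (U * Uᵀ)) := fun U hU => by
    rw [htildeU, of_finProdFinEquiv_mul_transpose, sum_trace_sub_mul_transpose_sub hU hUv,
      Fintype.card_fin, Fintype.card_fin]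
  obtain ⟨U₀, hU₀, hmax⟩ := hH.exists_trace_mul_mul_transpose_eq hkn e
  refine ⟨⟨U₀, hU₀, by rw [hobjective U₀ hU₀, hmax]⟩, ?_⟩
  rintro _ ⟨U, hU, rfl⟩
  rw [hobjective U hU]
  linarith [hH.trace_mul_mul_transpose_le hk he hU]

/-- Let `U^1, …, U^V` be real `n × k` matrices with orthonormal columns and
let `Ũ = [U^1 U^2 ⋯ U^V] ∈ ℝ^{n × (V·k)}` be their horizontal concatenation.  Then the minimum
of `∑ v ‖U Uᵀ − U^v (U^v)ᵀ‖_F²` over all real `n × k` matrices `U` with `Uᵀ U = I_k` equals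
`2·V·k − 2·(sum of the k largest eigenvalues of Ũ Ũᵀ)`, where the eigenvalues of `Ũ Ũᵀ` are
enumerated in any nonincreasing order and `‖B‖_F² = tr (B Bᵀ)`. -/
theorem min_disagreement_eq_two_Vk_sub_two_sum_k_largest
    (n k V : ℕ) (hn : 0 < n) (hk : 0 < k) (hV : 0 < V)
    (Uv : Fin V → Matrix (Fin n) (Fin k) ℝ)
    (hUv : ∀ v, (Uv v)ᵀ * Uv v = 1)
    (tildeU : Matrix (Fin n) (Fin (V * k)) ℝ)
    (htildeU : tildeU = Matrix.of fun i c =>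
      Uv (finProdFinEquiv.symm c).1 i (finProdFinEquiv.symm c).2)
    (hH : (tildeU * tildeUᵀ).IsHermitian)
    (e : Equiv.Perm (Fin n)) (he : Antitone (fun i => hH.eigenvalues (e i))) :
    IsLeast
      {t : ℝ | ∃ U : Matrix (Fin n) (Fin k) ℝ, Uᵀ * U = 1 ∧
        t = ∑ v, trace ((U * Uᵀ - Uv v * (Uv v)ᵀ) * (U * Uᵀ - Uv v * (Uv v)ᵀ)ᵀ)}
      (2 * (V : ℝ) * (k : ℝ)
        - 2 * ∑ i ∈ Finset.univ.filter (fun i : Fin n => (i : ℕ) < k), hH.eigenvalues (e i)) :=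
  min_disagreement_eq_two_Vk_sub_two_sum_k_largest_general n k V hk hV Uv hUv tildeU htildeU hH e he
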